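/- arXiv:2511.07346 — 3 statements merged into one kernel-verified Lean document; each statement's English description precedes it below -/
import Mathlib

section
/- Let G be a connected graph and T a subset of its vertices with |T| ≥ 2. Suppose that for every vertex x ∈ V(G) \ T, the graph G − x has at least two connected components each containing a vertex of T. Then the number of vertices of G of degree at least 3 is at most 3(|T| − 2). -/
/-!
Strengthen the bound to count, besides the vertices of degree at least 3, the terminals of
degree 2, and induct on the number of vertices. If every vertex is a terminal the bound is
immediate. Otherwise a nonterminal `x` separates two terminals, so it splits the graph into two
connected pieces meeting only in `x`. Making `x` a terminal of both pieces, each piece again has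
every nonterminal separating two of its terminals, and the terminal counts of the pieces add up
to `|T| + 2`. Degrees are unchanged except at `x`, whose degree splits between the pieces; if it
is at least 3, then `x` has degree at least 2 in one piece, where it is counted as a terminal.
-/

open Finset

namespace SimpleGraph

variable {V : Type*} (G : SimpleGraph V)

def ReachableIn (s : Set V) (a b : V) : Prop :=
  ∃ p : G.Walk a b, ∀ z ∈ p.support, z ∈ s

namespace ReachableIn

variable {G} {s t : Set V} {a b c x : V}

lemma refl (ha : a ∈ s) : G.ReachableIn s a a :=
  ⟨.nil, by simpa using ha⟩

lemma of_adj (hab : G.Adj a b) (ha : a ∈ s) (hb : b ∈ s) : G.ReachableIn s a b :=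
  ⟨hab.toWalk, by simp [ha, hb]⟩

lemma symm (h : G.ReachableIn s a b) : G.ReachableIn s b a := by
  obtain ⟨p, hp⟩ := h
  exact ⟨p.reverse, by simpa using hp⟩

lemma trans (hab : G.ReachableIn s a b) (hbc : G.ReachableIn s b c) : G.ReachableIn s a c := by
  obtain ⟨p, hp⟩ := hab
  obtain ⟨q, hq⟩ := hbc
  refine ⟨p.append q, fun z hz => ?_⟩
  rcases (Walk.mem_support_append_iff p q).mp hz with hz | hz
  exacts [hp z hz, hq z hz]

lemma mono (hst : s ⊆ t) (h : G.ReachableIn s a b) : G.ReachableIn t a b := by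
  obtain ⟨p, hp⟩ := h
  exact ⟨p, fun z hz => hst (hp z hz)⟩

lemma reachable_induce (h : G.ReachableIn s a b) (ha : a ∈ s) (hb : b ∈ s) :
    (G.induce s).Reachable ⟨a, ha⟩ ⟨b, hb⟩ := by
  obtain ⟨p, hp⟩ := h
  exact ⟨p.induce s hp⟩

lemma of_reachable (h : G.Reachable a b) : G.ReachableIn Set.univ a b := by
  obtain ⟨p⟩ := h
  exact ⟨p, by simp⟩

/-- A walk inside `s` starting in `t` cannot leave `t` before it reaches `x`. -/
lemma of_closed (hxt : x ∈ t)
    (hclosed : ∀ v ∈ t, v ≠ x → ∀ w ∈ s, G.Adj v w → w ∈ t) :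
    ∀ {v : V}, v ∈ t → G.ReachableIn s v x → G.ReachableIn t v x := by
  rintro v hv ⟨p, hp⟩
  induction p with
  | nil => exact refl hv
  | @cons v w y hvw p ih =>
    by_cases hvy : v = y
    · subst hvy; exact refl hv
    have hw : w ∈ t := hclosed v hv hvy w (hp w (by simp)) hvw
    exact (of_adj hvw hv hw).trans (ih hxt hclosed hw fun z hz => hp z (by simp [hz]))

end ReachableIn

section Degree

variable [DecidableRel G.Adj]

def degreeIn (S : Finset V) (v : V) : ℕ := #{w ∈ S | G.Adj v w}

variable {G}

lemma degreeIn_lt_card {S : Finset V} {v : V} (hv : v ∈ S) : G.degreeIn S v < #S :=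
  card_lt_card <| filter_ssubset.2 ⟨v, hv, G.loopless.irrefl v⟩

lemma degreeIn_univ [Fintype V] (v : V) : G.degreeIn univ v = G.degree v := by
  rw [degreeIn, ← card_neighborFinset_eq_degree, neighborFinset_eq_filter]

end Degree

variable [DecidableEq V]

structure IsSeparation (S : Finset V) (x : V) (A B : Finset V) : Prop where
  union_eq : A ∪ B = S
  inter_eq : A ∩ B = {x}
  eq_or_eq_of_adj : ∀ a ∈ A, ∀ b ∈ B, G.Adj a b → a = x ∨ b = x

structure NonterminalsSeparate (S T : Finset V) : Prop where
  subset : T ⊆ S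
  reachableIn : ∀ a ∈ S, ∀ b ∈ S, G.ReachableIn S a b
  exists_not_reachableIn :
    ∀ x ∈ S, x ∉ T → ∃ t₁ ∈ T, ∃ t₂ ∈ T, ¬ G.ReachableIn (S.erase x) t₁ t₂

variable {G}

lemma exists_isSeparation {S : Finset V} {x t₁ t₂ : V} (hx : x ∈ S) (ht₁ : t₁ ∈ S.erase x)
    (ht₂ : t₂ ∈ S) (h : ¬ G.ReachableIn (S.erase x) t₁ t₂) :
    ∃ A B, G.IsSeparation S x A B ∧ t₁ ∈ A ∧ t₂ ∈ B := by
  classical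
  set C := {v ∈ S.erase x | G.ReachableIn (S.erase x) t₁ v}
  have hCS : C ⊆ S.erase x := filter_subset _ _
  have hxC : x ∉ C := fun hx' => by simpa using hCS hx'
  refine ⟨insert x C, S \ C, ⟨?_, ?_, ?_⟩, mem_insert_of_mem ?_, mem_sdiff.2 ⟨ht₂, ?_⟩⟩
  · rw [insert_union, union_sdiff_of_subset (hCS.trans (erase_subset x S)), insert_eq_of_mem hx]
  · ext v
    constructor
    · intro hv
      simp only [mem_inter, mem_insert, mem_sdiff] at hv
      simp only [mem_singleton]
      tauto
    · intro hv
      rw [mem_singleton.1 hv]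
      exact mem_inter.2 ⟨mem_insert_self x C, mem_sdiff.2 ⟨hx, hxC⟩⟩
  · intro a ha b hb hab
    by_contra! hne
    have haC : a ∈ C := (mem_insert.1 ha).resolve_left hne.1
    have hbS : b ∈ S.erase x := mem_erase.2 ⟨hne.2, (mem_sdiff.1 hb).1⟩
    refine (mem_sdiff.1 hb).2 (mem_filter.2 ⟨hbS, ?_⟩)
    exact (mem_filter.1 haC).2.trans (.of_adj hab (hCS haC) hbS)
  · exact mem_filter.2 ⟨ht₁, .refl ht₁⟩
  · exact fun ht₂C => h (mem_filter.1 ht₂C).2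

namespace IsSeparation

variable {S A B T : Finset V} {x : V} (h : G.IsSeparation S x A B)
include h

lemma symm : G.IsSeparation S x B A where
  union_eq := union_comm A B ▸ h.union_eq
  inter_eq := inter_comm A B ▸ h.inter_eq
  eq_or_eq_of_adj b hb a ha hba := (h.eq_or_eq_of_adj a ha b hb hba.symm).symm

lemma mem_left : x ∈ A := (mem_inter.1 (h.inter_eq ▸ mem_singleton_self x)).1

lemma subset_left : A ⊆ S := h.union_eq ▸ subset_union_left

lemma notMem_right {v : V} (hv : v ∈ A) (hvx : v ≠ x) : v ∉ B := fun hvB =>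
  hvx <| mem_singleton.1 <| h.inter_eq ▸ mem_inter.2 ⟨hv, hvB⟩

lemma mem_left_of_adj {v w : V} (hv : v ∈ A) (hvx : v ≠ x) (hw : w ∈ S) (hvw : G.Adj v w) :
    w ∈ A := by
  rcases mem_union.1 (h.union_eq ▸ hw) with hwA | hwB
  · exact hwA
  · rcases h.eq_or_eq_of_adj v hv w hwB hvw with rfl | rfl
    exacts [absurd rfl hvx, h.mem_left]

lemma ssubset_left {b : V} (hb : b ∈ B) (hbx : b ≠ x) : A ⊂ S :=
  (ssubset_iff_of_subset h.subset_left).2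
    ⟨b, h.symm.subset_left hb, h.symm.notMem_right hb hbx⟩

lemma card_inter_add_card_inter (hTS : T ⊆ S) (hx : x ∉ T) : #(T ∩ A) + #(T ∩ B) = #T := by
  rw [← card_union_of_disjoint, ← inter_union_distrib_left, h.union_eq, inter_eq_left.2 hTS]
  refine Finset.disjoint_left.2 fun v hvA hvB => hx ?_
  have hv : v ∈ A ∩ B := mem_inter.2 ⟨(mem_inter.1 hvA).2, (mem_inter.1 hvB).2⟩
  rw [h.inter_eq, mem_singleton] at hv
  exact hv ▸ (mem_inter.1 hvA).1

lemma reachableIn_left (hS : ∀ a ∈ S, ∀ b ∈ S, G.ReachableIn S a b) {a : V} (ha : a ∈ A) :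
    G.ReachableIn A a x :=
  ReachableIn.of_closed (s := S) h.mem_left (fun _ hv hvx _ hw => h.mem_left_of_adj hv hvx hw) ha
    (hS a (h.subset_left ha) x (h.subset_left h.mem_left))

lemma mem_left_or_reachableIn_erase (hS : ∀ a ∈ S, ∀ b ∈ S, G.ReachableIn S a b) {y t : V}
    (hy : y ∈ A) (hyx : y ≠ x) (ht : t ∈ S) : t ∈ A ∨ G.ReachableIn (S.erase y) t x := by
  rcases mem_union.1 (h.union_eq ▸ ht) with htA | htB
  · exact .inl htA
  refine .inr ((h.symm.reachableIn_left hS htB).mono fun z hz => ?_)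
  exact mem_erase.2 ⟨fun hzy => h.notMem_right hy hyx (hzy ▸ hz), h.symm.subset_left hz⟩

end IsSeparation

lemma NonterminalsSeparate.restrict {S A B T : Finset V} {x : V}
    (hG : G.NonterminalsSeparate S T) (h : G.IsSeparation S x A B) :
    G.NonterminalsSeparate A (insert x (T ∩ A)) where
  subset := insert_subset h.mem_left inter_subset_right
  reachableIn a ha b hb :=
    (h.reachableIn_left hG.reachableIn ha).trans (h.reachableIn_left hG.reachableIn hb).symm
  exists_not_reachableIn y hyA hy := by
    have hyx : y ≠ x := fun hyx => hy (by rw [hyx]; exact mem_insert_self x _)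
    have hyT : y ∉ T := fun hyT => hy (mem_insert_of_mem (mem_inter.2 ⟨hyT, hyA⟩))
    have hproj : ∀ t ∈ T, ∃ t' ∈ insert x (T ∩ A), G.ReachableIn (S.erase y) t t' := by
      intro t ht
      rcases h.mem_left_or_reachableIn_erase hG.reachableIn hyA hyx (hG.subset ht) with htA | hr
      · have hty : t ≠ y := fun hty => hyT (hty ▸ ht)
        exact ⟨t, mem_insert_of_mem (mem_inter.2 ⟨ht, htA⟩),
          .refl (mem_erase.2 ⟨hty, hG.subset ht⟩)⟩
      · exact ⟨x, mem_insert_self x _, hr⟩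
    obtain ⟨t₁, ht₁, t₂, ht₂, hnot⟩ := hG.exists_not_reachableIn y (h.subset_left hyA) hyT
    obtain ⟨t₁', ht₁', hr₁⟩ := hproj t₁ ht₁
    obtain ⟨t₂', ht₂', hr₂⟩ := hproj t₂ ht₂
    refine ⟨t₁', ht₁', t₂', ht₂', fun hr => hnot ?_⟩
    have hsub : (↑(A.erase y) : Set V) ⊆ ↑(S.erase y) :=
      coe_subset.2 (erase_subset_erase y h.subset_left)
    exact (hr₁.trans (hr.mono hsub)).trans hr₂.symm

section Counting

variable [DecidableRel G.Adj]

variable (G) in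
def branchCount (S T : Finset V) : ℕ :=
  #{v ∈ S | 3 ≤ G.degreeIn S v ∨ (v ∈ T ∧ G.degreeIn S v = 2)}

lemma branchCount_self_le {S : Finset V} (hS : 2 ≤ #S) : G.branchCount S S ≤ 3 * (#S - 2) := by
  rcases hS.eq_or_lt with hS | hS
  · suffices G.branchCount S S = 0 by omega
    refine card_eq_zero.2 (filter_eq_empty_iff.2 fun v hv => ?_)
    have := degreeIn_lt_card (G := G) hv
    omega
  · exact (card_filter_le _ _).trans (by omega)

namespace IsSeparation

variable {S A B T : Finset V} {x : V} (h : G.IsSeparation S x A B)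
include h

lemma degreeIn_left {v : V} (hv : v ∈ A) (hvx : v ≠ x) : G.degreeIn A v = G.degreeIn S v := by
  refine congrArg card (subset_antisymm (filter_subset_filter _ h.subset_left) fun w hw => ?_)
  obtain ⟨hwS, hvw⟩ := mem_filter.1 hw
  exact mem_filter.2 ⟨h.mem_left_of_adj hv hvx hwS hvw, hvw⟩

lemma degreeIn_add_degreeIn : G.degreeIn A x + G.degreeIn B x = G.degreeIn S x := by
  rw [degreeIn, degreeIn, degreeIn, ← h.union_eq, filter_union, card_union_of_disjoint]
  refine Finset.disjoint_left.2 fun v hvA hvB => ?_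
  have hv : v ∈ A ∩ B := mem_inter.2 ⟨(mem_filter.1 hvA).1, (mem_filter.1 hvB).1⟩
  rw [h.inter_eq, mem_singleton] at hv
  exact G.loopless.irrefl x (hv ▸ (mem_filter.1 hvA).2)

lemma branch_left {v : V} (hv : v ∈ A) (hvx : v ≠ x)
    (hbr : 3 ≤ G.degreeIn S v ∨ (v ∈ T ∧ G.degreeIn S v = 2)) :
    3 ≤ G.degreeIn A v ∨ (v ∈ insert x (T ∩ A) ∧ G.degreeIn A v = 2) := by
  rw [h.degreeIn_left hv hvx]
  exact hbr.imp_right fun ⟨hvT, hdeg⟩ => ⟨mem_insert_of_mem (mem_inter.2 ⟨hvT, hv⟩), hdeg⟩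

lemma branchCount_le_add (hx : x ∉ T) :
    G.branchCount S T ≤
      G.branchCount A (insert x (T ∩ A)) + G.branchCount B (insert x (T ∩ B)) := by
  refine (card_le_card fun v hv => ?_).trans (card_union_le _ _)
  obtain ⟨hvS, hbr⟩ := mem_filter.1 hv
  rw [mem_union, mem_filter, mem_filter]
  by_cases hvx : v = x
  · subst hvx
    have hdeg := h.degreeIn_add_degreeIn
    have h3 : 3 ≤ G.degreeIn S v := hbr.resolve_right fun hvT => hx hvT.1
    have two_le {P : Finset V} {d : ℕ} (hd : 2 ≤ d) : 3 ≤ d ∨ (v ∈ insert v (T ∩ P) ∧ d = 2) :=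
      hd.lt_or_eq.imp id fun e => ⟨mem_insert_self _ _, e.symm⟩
    rcases (show 2 ≤ G.degreeIn A v ∨ 2 ≤ G.degreeIn B v by omega) with hA | hB
    exacts [.inl ⟨h.mem_left, two_le hA⟩, .inr ⟨h.symm.mem_left, two_le hB⟩]
  rcases mem_union.1 (h.union_eq ▸ hvS) with hvA | hvB
  · exact .inl ⟨hvA, h.branch_left hvA hvx hbr⟩
  · exact .inr ⟨hvB, h.symm.branch_left hvB hvx hbr⟩

end IsSeparation

theorem NonterminalsSeparate.branchCount_le {S T : Finset V} (hG : G.NonterminalsSeparate S T)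
    (hT : 2 ≤ #T) : G.branchCount S T ≤ 3 * (#T - 2) := by
  induction S using Finset.strongInduction generalizing T with
  | H S ih =>
  by_cases hST : S ⊆ T
  · obtain rfl := subset_antisymm hST hG.subset
    exact branchCount_self_le hT
  obtain ⟨x, hxS, hxT⟩ := not_subset.1 hST
  obtain ⟨t₁, ht₁, t₂, ht₂, hnot⟩ := hG.exists_not_reachableIn x hxS hxT
  have hne : ∀ t ∈ T, t ≠ x := fun t ht htx => hxT (htx ▸ ht)
  obtain ⟨A, B, h, ht₁A, ht₂B⟩ :=
    exists_isSeparation hxS (mem_erase.2 ⟨hne t₁ ht₁, hG.subset ht₁⟩) (hG.subset ht₂) hnot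
  have hcard {P : Finset V} {t : V} (ht : t ∈ T) (htP : t ∈ P) :
      #(insert x (T ∩ P)) = #(T ∩ P) + 1 ∧ 1 ≤ #(T ∩ P) :=
    ⟨card_insert_of_notMem fun hx => hxT (mem_inter.1 hx).1,
      card_pos.2 ⟨t, mem_inter.2 ⟨ht, htP⟩⟩⟩
  obtain ⟨hA, hA₁⟩ := hcard ht₁ ht₁A
  obtain ⟨hB, hB₁⟩ := hcard ht₂ ht₂B
  have hAB := h.card_inter_add_card_inter hG.subset hxT
  have ihA := ih A (h.ssubset_left ht₂B (hne t₂ ht₂)) (hG.restrict h) (by omega)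
  have ihB := ih B (h.symm.ssubset_left ht₁A (hne t₁ ht₁)) (hG.restrict h.symm) (by omega)
  have := h.branchCount_le_add hxT
  omega

end Counting

end SimpleGraph

open SimpleGraph

/-- If `G` is a finite simple connected graph and `T ⊆ V(G)` with `|T| ≥ 2`
such that for every `x ∉ T`, deleting `x` leaves at least two connected components each
containing a vertex of `T`, then the number of vertices of degree at least 3 is at most
`3(|T| − 2)`. -/
theorem stmt0 {V : Type*} [Fintype V] [DecidableEq V]
    (G : SimpleGraph V) [DecidableRel G.Adj] (T : Finset V)
    (hconn : G.Connected) (hT : 2 ≤ T.card)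
    (hcrit : ∀ x : V, x ∉ T →
      ∃ t₁ t₂ : ({v : V | v ≠ x} : Set V), (t₁ : V) ∈ T ∧ (t₂ : V) ∈ T ∧
        ¬ (SimpleGraph.induce {v : V | v ≠ x} G).Reachable t₁ t₂) :
    (Finset.univ.filter fun v => 3 ≤ G.degree v).card ≤ 3 * (T.card - 2) := by
  have hG : G.NonterminalsSeparate univ T := by
    refine ⟨subset_univ T, fun a _ b _ => ?_, fun x _ hx => ?_⟩
    · simpa using ReachableIn.of_reachable (hconn.preconnected a b)
    · obtain ⟨t₁, t₂, ht₁, ht₂, hnot⟩ := hcrit x hx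
      refine ⟨t₁, ht₁, t₂, ht₂, fun hr => hnot ?_⟩
      exact (hr.mono fun _ => ne_of_mem_erase).reachable_induce t₁.2 t₂.2
  calc #{v | 3 ≤ G.degree v} ≤ G.branchCount univ T := by
        simp only [branchCount, degreeIn_univ]
        exact card_le_card (monotone_filter_right _ fun _ _ => Or.inl)
    _ ≤ 3 * (#T - 2) := hG.branchCount_le hT
end

section
/- Let G be a connected graph and Y ⊆ V(G) be critically connected, i.e., for every x ∈ V(G) \ Y, the graph G − x has at least two connected components containing a vertex of Y. Then in fact for every x ∈ V(G) \ Y, every connected component of G − x contains a vertex of Y. -/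
open SimpleGraph

/-- A walk in `G` avoiding `w` gives reachability in the graph induced on `{u | u ≠ w}`. -/
lemma walk_avoid_reachable {V : Type*} {G : SimpleGraph V} {w : V} :
    ∀ {a b : V} (p : G.Walk a b) (hw : w ∉ p.support)
      (ha : a ∈ ({v : V | v ≠ w} : Set V)) (hb : b ∈ ({v : V | v ≠ w} : Set V)),
      (SimpleGraph.induce {v : V | v ≠ w} G).Reachable ⟨a, ha⟩ ⟨b, hb⟩ := by
  intro a b p
  induction p with
  | nil => intro _ _ _; rfl
  | @cons a c b hadj p ih =>
      intro hw ha hb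
      simp only [SimpleGraph.Walk.support_cons, List.mem_cons] at hw
      push_neg at hw
      have hc : c ∈ ({v : V | v ≠ w} : Set V) :=
        fun h => hw.2 (h ▸ p.start_mem_support)
      refine SimpleGraph.Reachable.trans ?_ (ih hw.2 hc hb)
      exact SimpleGraph.Adj.reachable (by simpa using hadj)

/-- If `Y` is critically connected in a connected graph `G` (for every
`x ∉ Y`, at least two components of `G − x` contain a vertex of `Y`), then for every
`x ∉ Y`, every connected component of `G − x` contains a vertex of `Y`. -/
theorem stmt2 {V : Type*} [Fintype V] [DecidableEq V]
    (G : SimpleGraph V) (Y : Set V)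
    (hconn : G.Connected) (hY : 2 ≤ Y.ncard)
    (hcrit : ∀ x : V, x ∉ Y →
      ∃ t₁ t₂ : ({v : V | v ≠ x} : Set V), (t₁ : V) ∈ Y ∧ (t₂ : V) ∈ Y ∧
        ¬ (SimpleGraph.induce {v : V | v ≠ x} G).Reachable t₁ t₂) :
    ∀ x : V, x ∉ Y → ∀ v : ({v : V | v ≠ x} : Set V),
      ∃ t : ({v : V | v ≠ x} : Set V), (t : V) ∈ Y ∧
        (SimpleGraph.induce {v : V | v ≠ x} G).Reachable v t := by
  intro x hx v
  by_contra hcon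
  push_neg at hcon
  have hvx : (v : V) ≠ x := v.2
  -- v itself is not in Y
  have hvY : (v : V) ∉ Y := fun h => hcon v h (SimpleGraph.Reachable.refl v)
  obtain ⟨t₁, t₂, ht₁Y, ht₂Y, hnr⟩ := hcrit (v : V) hvY
  -- any vertex u ≠ v that is either x or not reachable from v in G − x
  -- is reachable to x in G − v
  have key : ∀ u : V, ∀ huv : u ≠ (v : V),
      (∀ hu : u ≠ x, ¬ (SimpleGraph.induce {w : V | w ≠ x} G).Reachable v ⟨u, hu⟩) →
      (SimpleGraph.induce {w : V | w ≠ (v : V)} G).Reachable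
        ⟨u, huv⟩ ⟨x, fun h => hvx h.symm⟩ := by
    intro u huv hu
    obtain ⟨p⟩ := hconn u x
    have hxmem : x ∈ p.support := SimpleGraph.Walk.end_mem_support p
    set q := p.takeUntil x hxmem with hq
    have hcount : q.support.count x = 1 := p.count_support_takeUntil_eq_one hxmem
    have hvq : (v : V) ∉ q.support := by
      intro hvmem
      set r := q.takeUntil (v : V) hvmem with hr
      have hxr : x ∉ r.support := by
        intro hxr
        have hsplit := q.take_spec hvmem
        have h2 : x ∈ (q.dropUntil (v : V) hvmem).support.tail :=
          SimpleGraph.Walk.end_mem_tail_support_of_ne hvx _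
        have h1 : 1 ≤ r.support.count x := List.one_le_count_iff.mpr hxr
        have h2' : 1 ≤ ((q.dropUntil (v : V) hvmem).support.tail).count x :=
          List.one_le_count_iff.mpr h2
        have : q.support.count x ≥ 2 := by
          calc q.support.count x
              = (r.support ++ (q.dropUntil (v : V) hvmem).support.tail).count x := by
                rw [← SimpleGraph.Walk.support_append, hsplit]
            _ = r.support.count x + ((q.dropUntil (v : V) hvmem).support.tail).count x :=
                List.count_append ..
            _ ≥ 2 := by omega
        omega
      have hux : u ≠ x := fun h => hxr (h ▸ r.start_mem_support)
      exact hu hux (walk_avoid_reachable (w := x) r hxr hux hvx).symm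
    -- v ∉ q.support, so u reachable to x in G − v
    exact walk_avoid_reachable (w := (v : V)) q hvq huv (fun h => hvx h.symm)
  -- apply key to t₁ and t₂
  have h₁ := key (t₁ : V) t₁.2 (fun h1 hr => hcon ⟨(t₁ : V), h1⟩ ht₁Y hr)
  have h₂ := key (t₂ : V) t₂.2 (fun h2 hr => hcon ⟨(t₂ : V), h2⟩ ht₂Y hr)
  exact hnr (by simpa using h₁.trans h₂.symm)
end

section
/- Let G be a connected graph and T ⊆ V(G) with |T| = 2 such that T is critically connected in G (for every x ∈ V(G) \ T, removing x leaves the two vertices of T in different components). Then G is a path whose two endpoints are exactly the two vertices of T. -/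
open SimpleGraph

private lemma aux_dist_getVert_le {V : Type*} {G : SimpleGraph V} (hconn : G.Connected)
    {u v : V} (p : G.Walk u v) : ∀ i : ℕ, G.dist u (p.getVert i) ≤ i := by
  induction p with
  | nil =>
    intro i
    rw [SimpleGraph.Walk.getVert_of_length_le _ (by simp)]
    simp [SimpleGraph.dist_self]
  | @cons u w v h q ih =>
    intro i
    cases i with
    | zero => simp [SimpleGraph.Walk.getVert_zero, SimpleGraph.dist_self]
    | succ i =>
      rw [SimpleGraph.Walk.getVert_cons_succ]
      calc G.dist u (q.getVert i) ≤ G.dist u w + G.dist w (q.getVert i) :=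
            hconn.dist_triangle
        _ ≤ 1 + i := add_le_add (SimpleGraph.dist_eq_one_iff_adj.mpr h).le (ih i)
        _ = i + 1 := by omega

private lemma aux_reach_induce {V : Type*} {G : SimpleGraph V} (s : Set V)
    {u v : V} (p : G.Walk u v) :
    ∀ (hp : ∀ w ∈ p.support, w ∈ s),
      (G.induce s).Reachable ⟨u, hp u p.start_mem_support⟩ ⟨v, hp v p.end_mem_support⟩ := by
  induction p with
  | nil => intro hp; rfl
  | @cons u w v h q ih =>
    intro hp
    have hw : w ∈ s := hp w (by simp)
    have hadj : (G.induce s).Adj ⟨u, hp u (SimpleGraph.Walk.start_mem_support _)⟩ ⟨w, hw⟩ := by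
      simp only [SimpleGraph.comap_adj, Function.Embedding.coe_subtype]
      exact h
    exact hadj.reachable.trans (ih fun x hx => hp x (by simp [hx]))

/-- If `G` is connected, `T ⊆ V(G)` has exactly two vertices, and `T` is
critically connected (removing any `x ∉ T` separates the two vertices of `T`), then `G`
is a path whose endpoints are exactly the vertices of `T`: every vertex of `T` has
degree 1 and every other vertex has degree 2. -/
theorem stmt3 {V : Type*} [Fintype V] [DecidableEq V]
    (G : SimpleGraph V) [DecidableRel G.Adj] (T : Finset V)
    (hconn : G.Connected) (hT : T.card = 2)
    (hcrit : ∀ x : V, x ∉ T →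
      ∃ t₁ t₂ : ({v : V | v ≠ x} : Set V), (t₁ : V) ∈ T ∧ (t₂ : V) ∈ T ∧
        ¬ (SimpleGraph.induce {v : V | v ≠ x} G).Reachable t₁ t₂) :
    (∀ v ∈ T, G.degree v = 1) ∧ (∀ v : V, v ∉ T → G.degree v = 2) := by
  classical
  obtain ⟨a, b, hab, hTab⟩ := Finset.card_eq_two.mp hT
  obtain ⟨p, hp⟩ := hconn.exists_walk_length_eq_dist a b
  set n := p.length with hn
  -- every vertex lies on p
  have hcover : ∀ v : V, ∃ i, i ≤ n ∧ p.getVert i = v := by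
    intro v
    by_cases hvT : v ∈ T
    · rw [hTab] at hvT
      simp only [Finset.mem_insert, Finset.mem_singleton] at hvT
      rcases hvT with rfl | rfl
      · exact ⟨0, Nat.zero_le _, p.getVert_zero⟩
      · exact ⟨n, le_rfl, p.getVert_length⟩
    · by_contra hcon
      push_neg at hcon
      have hsup : ∀ w ∈ p.support, w ∈ ({x : V | x ≠ v} : Set V) := by
        intro w hw
        obtain ⟨i, hi, hiw⟩ := SimpleGraph.Walk.mem_support_iff_exists_getVert.mp hw
        exact fun hwv => hcon i hiw (by rw [hi, hwv])
      have hreach := aux_reach_induce ({x : V | x ≠ v} : Set V) p hsup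
      obtain ⟨t₁, t₂, ht₁, ht₂, hnr⟩ := hcrit v hvT
      apply hnr
      rw [hTab] at ht₁ ht₂
      simp only [Finset.mem_insert, Finset.mem_singleton] at ht₁ ht₂
      have ha : (⟨a, hsup a p.start_mem_support⟩ : ({x : V | x ≠ v} : Set V)) = t₁ ∨
          (⟨b, hsup b p.end_mem_support⟩ : ({x : V | x ≠ v} : Set V)) = t₁ := by
        rcases ht₁ with h | h
        · exact Or.inl (Subtype.ext h.symm)
        · exact Or.inr (Subtype.ext h.symm)
      have hb : (⟨a, hsup a p.start_mem_support⟩ : ({x : V | x ≠ v} : Set V)) = t₂ ∨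
          (⟨b, hsup b p.end_mem_support⟩ : ({x : V | x ≠ v} : Set V)) = t₂ := by
        rcases ht₂ with h | h
        · exact Or.inl (Subtype.ext h.symm)
        · exact Or.inr (Subtype.ext h.symm)
      rcases ha with rfl | rfl <;> rcases hb with rfl | rfl
      · rfl
      · exact hreach
      · exact hreach.symm
      · rfl
  -- distances along the walk
  have hdg : ∀ i, i ≤ n → G.dist a (p.getVert i) = i := by
    intro i hi
    have h1 : G.dist a (p.getVert i) ≤ i := aux_dist_getVert_le hconn p i
    have h2 : G.dist (p.getVert i) b ≤ n - i := by
      have hrev : p.reverse.getVert (n - i) = p.getVert i := by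
        rw [SimpleGraph.Walk.getVert_reverse]
        congr 1
        omega
      have := aux_dist_getVert_le hconn p.reverse (n - i)
      rw [hrev] at this
      rwa [SimpleGraph.dist_comm]
    have h3 : n ≤ G.dist a (p.getVert i) + G.dist (p.getVert i) b := by
      calc n = G.dist a b := hp
        _ ≤ _ := hconn.dist_triangle
    omega
  have hrep : ∀ v : V, G.dist a v ≤ n ∧ p.getVert (G.dist a v) = v := by
    intro v
    obtain ⟨i, hi, hiv⟩ := hcover v
    have := hdg i hi
    rw [hiv] at this
    rw [this]
    exact ⟨hi, hiv⟩
  have hinj : ∀ u w : V, G.dist a u = G.dist a w → u = w := by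
    intro u w h
    have hu := (hrep u).2
    have hw := (hrep w).2
    rw [← hu, ← hw, h]
  have npos : 0 < n := by
    have h := hconn.pos_dist_of_ne hab
    omega
  have hadjd : ∀ u w : V, G.Adj u w →
      G.dist a w = G.dist a u + 1 ∨ G.dist a u = G.dist a w + 1 := by
    intro u w h
    have h1 : G.dist a w ≤ G.dist a u + 1 := by
      calc G.dist a w ≤ G.dist a u + G.dist u w := hconn.dist_triangle
        _ = G.dist a u + 1 := by rw [SimpleGraph.dist_eq_one_iff_adj.mpr h]
    have h2 : G.dist a u ≤ G.dist a w + 1 := by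
      calc G.dist a u ≤ G.dist a w + G.dist w u := hconn.dist_triangle
        _ = G.dist a w + 1 := by rw [SimpleGraph.dist_eq_one_iff_adj.mpr h.symm]
    have h3 : G.dist a u ≠ G.dist a w := fun hc => (h.ne (hinj u w hc)).elim
    omega
  have hda : G.dist a a = 0 := SimpleGraph.dist_self
  have hdb : G.dist a b = n := hp.symm
  constructor
  · intro v hv
    rw [hTab] at hv
    simp only [Finset.mem_insert, Finset.mem_singleton] at hv
    rcases hv with rfl | rfl
    · -- degree of a
      have hset : G.neighborFinset v = {p.getVert 1} := by
        ext w
        rw [SimpleGraph.mem_neighborFinset, Finset.mem_singleton]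
        constructor
        · intro h
          rcases hadjd v w h with h' | h'
          · rw [hda] at h'
            have := (hrep w).2
            rw [h'] at this
            exact this.symm
          · rw [hda] at h'; omega
        · rintro rfl
          have := p.adj_getVert_succ (i := 0) npos
          rwa [p.getVert_zero] at this
      rw [SimpleGraph.degree, hset, Finset.card_singleton]
    · -- degree of b
      have hset : G.neighborFinset v = {p.getVert (n - 1)} := by
        ext w
        rw [SimpleGraph.mem_neighborFinset, Finset.mem_singleton]
        constructor
        · intro h
          have hwle : G.dist a w ≤ n := (hrep w).1
          rcases hadjd v w h with h' | h'
          · rw [hdb] at h'; omega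
          · rw [hdb] at h'
            have := (hrep w).2
            rw [show G.dist a w = n - 1 by omega] at this
            exact this.symm
        · rintro rfl
          have := p.adj_getVert_succ (i := n - 1) (by omega)
          rw [show n - 1 + 1 = n by omega, p.getVert_length] at this
          exact this.symm
      rw [SimpleGraph.degree, hset, Finset.card_singleton]
  · intro v hv
    set i := G.dist a v with hi
    have hrv := hrep v
    have hi0 : i ≠ 0 := by
      intro h
      apply hv
      have : v = a := hinj v a (by rw [hda, ← hi, h])
      rw [hTab, this]; simp
    have hin : i ≠ n := by
      intro h
      apply hv
      have : v = b := hinj v b (by rw [hdb, ← hi, h])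
      rw [hTab, this]; simp
    have hiles : i ≤ n := hrv.1
    have hset : G.neighborFinset v = {p.getVert (i - 1), p.getVert (i + 1)} := by
      ext w
      rw [SimpleGraph.mem_neighborFinset, Finset.mem_insert, Finset.mem_singleton]
      constructor
      · intro h
        rcases hadjd v w h with h' | h'
        · right
          have := (hrep w).2
          rw [h', ← hi] at this
          exact this.symm
        · left
          have := (hrep w).2
          rw [show G.dist a w = i - 1 by omega] at this
          exact this.symm
      · rintro (rfl | rfl)
        · have := p.adj_getVert_succ (i := i - 1) (by omega)
          rw [show i - 1 + 1 = i by omega, hrv.2] at this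
          exact this.symm
        · have := p.adj_getVert_succ (i := i) (by omega)
          rw [hrv.2] at this
          exact this
    rw [SimpleGraph.degree, hset]
    rw [Finset.card_insert_of_notMem, Finset.card_singleton]
    rw [Finset.mem_singleton]
    intro hc
    have h1 := hdg (i - 1) (by omega)
    have h2 := hdg (i + 1) (by omega)
    rw [hc, h2] at h1
    omega
end
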